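/- The function u ↦ ρ(u) is continuous on the set {u ∈ [0,∞)^V : ‖u‖ = 1} (with the topology induced from ℝ^V). (Lemma 4.3(3).) -/

import Mathlib

open scoped Classical ENNReal

set_option linter.unusedSectionVars false

variable {V : Type*} [Fintype V] [DecidableEq V]

/-- An admissible swap exchanges two consecutive letters that are adjacent in `G`. -/
def AdjSwap (G : SimpleGraph V) (w w' : List V) : Prop :=
  ∃ (a b : List V) (u v : V), G.Adj u v ∧ w = a ++ u :: v :: b ∧ w' = a ++ v :: u :: b

/-- Two words are equivalent if one can be transformed into the other by finitely many
admissible swaps. -/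
def WordEquiv (G : SimpleGraph V) : List V → List V → Prop :=
  Relation.ReflTransGen (AdjSwap G)

lemma adjSwap_symm (G : SimpleGraph V) : Symmetric (AdjSwap G) := by
  rintro w w' ⟨a, b, u, v, h, rfl, rfl⟩
  exact ⟨a, b, v, u, h.symm, rfl, rfl⟩

/-- The setoid of words modulo admissible swaps. -/
def wordSetoid (G : SimpleGraph V) : Setoid (List V) where
  r := WordEquiv G
  iseqv := ⟨fun _ => Relation.ReflTransGen.refl,
    fun h => by
      induction h with
      | refl => exact Relation.ReflTransGen.refl
      | tail _ hs ih => exact Relation.ReflTransGen.head (adjSwap_symm G hs) ih,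
    fun h h' => Relation.ReflTransGen.trans h h'⟩

/-- A word is `G`-reduced if between any two equal letters there is a letter distinct from
them and not adjacent to them. -/
def IsGReduced (G : SimpleGraph V) (w : List V) : Prop :=
  ∀ i j : Fin w.length, i < j → w.get i = w.get j →
    ∃ k : Fin w.length, i < k ∧ k < j ∧ w.get k ≠ w.get i ∧ ¬ G.Adj (w.get k) (w.get i)

/-- The product `x_{w_1} ⋯ x_{w_ℓ}` depends only on the equivalence class of a word. -/
noncomputable def classProd (G : SimpleGraph V) (x : V → ℝ≥0∞) :
    Quotient (wordSetoid G) → ℝ≥0∞ :=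
  Quotient.lift (fun w : List V => (w.map x).prod) (by
    intro a b h
    induction h with
    | refl => rfl
    | tail _ hs ih =>
        obtain ⟨a', b', u, v, huv, rfl, rfl⟩ := hs
        rw [ih]
        simp only [List.map_append, List.prod_append, List.map_cons, List.prod_cons]
        ring)

/-- `tildeF G x` : the sum over all equivalence classes of words of `∏ x_{w_i}`,
valued in `[0,∞]`. -/
noncomputable def tildeF (G : SimpleGraph V) (x : V → ℝ) : ℝ≥0∞ :=
  ∑' c : Quotient (wordSetoid G), classProd G (fun v => ENNReal.ofReal (x v)) c

/-- `redF G x` : the sum over all equivalence classes of `G`-reduced words of `∏ x_{w_i}`,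
valued in `[0,∞]`. -/
noncomputable def redF (G : SimpleGraph V) (x : V → ℝ) : ℝ≥0∞ :=
  ∑' c : {c : Quotient (wordSetoid G) // ∃ w, IsGReduced G w ∧ Quotient.mk (wordSetoid G) w = c},
    classProd G (fun v => ENNReal.ofReal (x v)) c.1

/-- The clique polynomial `𝕶_{G,V'}(x) = ∑_{cliques K ⊆ V'} (-1)^{|K|} ∏_{v ∈ K} x_v`. -/
noncomputable def cliquePoly (G : SimpleGraph V) (V' : Finset V) (x : V → ℝ) : ℝ :=
  ∑ K ∈ V'.powerset.filter (fun K : Finset V => G.IsClique (K : Set V)),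
    (-1 : ℝ) ^ K.card * ∏ v ∈ K, x v

/-- The Euclidean norm on `ℝ^V`. -/
noncomputable def eucNorm (x : V → ℝ) : ℝ := Real.sqrt (∑ v, x v ^ 2)

/-- `min_{V' ⊆ V} 𝕶_{G,V'}(x)`. -/
noncomputable def minK (G : SimpleGraph V) (x : V → ℝ) : ℝ :=
  Finset.univ.inf' ⟨∅, Finset.mem_univ _⟩ fun V' : Finset V => cliquePoly G V' x

/-- `ρ(u) = inf {r ∈ [0,∞) : min_{V' ⊆ V} 𝕶_{G,V'}(r·u) = 0}`. -/
noncomputable def rho (G : SimpleGraph V) (u : V → ℝ) : ℝ :=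
  sInf {r : ℝ | 0 ≤ r ∧ minK G (r • u) = 0}

/-- The region `R(G) = {x ∈ [0,1]^V : 𝕶_{G,V'}(x) > 0 for all V' ⊆ V}`. -/
def regionR (G : SimpleGraph V) : Set (V → ℝ) :=
  {x | (∀ v, x v ∈ Set.Icc (0 : ℝ) 1) ∧ ∀ V' : Finset V, 0 < cliquePoly G V' x}


/-!
Along a ray `t ↦ t • u` with `u ≥ 0`, the derivative of `𝕶_{G,V'}(t • u)` is
`-∑_{w ∈ V'} u_w 𝕶_{G, V' ∩ N(w)}(t • u)`, because deleting `w` from a clique containing it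
leaves a clique in the neighbourhood of `w`. By induction on `V'`, once every `𝕶_{G,W}` is
nonnegative at `r • u`, every `𝕶_{G,V'}` is positive at `t • u` for `0 ≤ t < r`. Hence
`min_{V'} 𝕶_{G,V'}(t • u)` is positive for `0 ≤ t < ρ(u)` and negative for `t > ρ(u)`; the set
defining `ρ(u)` is nonempty since `𝕶_{G,{v}}(t • u) = 1 - t u_v`. A threshold at which a family
continuous in `u` changes sign is continuous in `u`, because each sign condition at a fixed `t` is
open.
-/

open Filter Topology Finset

theorem continuousOn_of_sign_change {X : Type*} [TopologicalSpace X] {f : X → ℝ → ℝ}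
    (hf : ∀ t, Continuous fun x => f x t) {g : X → ℝ} {S : Set X} (hg : ∀ x ∈ S, 0 ≤ g x)
    (hpos : ∀ x ∈ S, ∀ t, 0 ≤ t → t < g x → 0 < f x t)
    (hneg : ∀ x ∈ S, ∀ t, g x < t → f x t < 0) : ContinuousOn g S := by
  intro x hx
  have eventually_within {p : ℝ → Prop} {t : ℝ} (hp : IsOpen {y | p y}) (h : p (f x t)) :
      ∀ᶠ y in 𝓝[S] x, y ∈ S ∧ p (f y t) :=
    Filter.Eventually.and self_mem_nhdsWithin <| nhdsWithin_le_nhds <|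
      (hf t).continuousAt.preimage_mem_nhds (hp.mem_nhds h)
  refine tendsto_order.2 ⟨fun a ha => ?_, fun b hb => ?_⟩
  · rcases lt_or_ge a 0 with ha0 | ha0
    · filter_upwards [self_mem_nhdsWithin] with y hy using ha0.trans_le (hg y hy)
    obtain ⟨t, hat, htg⟩ := exists_between ha
    filter_upwards [eventually_within isOpen_Ioi (hpos x hx t (by linarith) htg)]
      with y ⟨hy, hft⟩
    exact hat.trans_le (not_lt.1 fun hgt => (hneg y hy t hgt).not_gt hft)
  · obtain ⟨t, hgt, htb⟩ := exists_between hb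
    filter_upwards [eventually_within isOpen_Iio (hneg x hx t hgt)] with y ⟨hy, hft⟩
    refine (not_lt.1 fun htg => (hpos y hy t ?_ htg).not_gt hft).trans_lt htb
    linarith [hg x hx]

section CliquePoly

variable {α : Type*} [DecidableEq α] (G : SimpleGraph α)

noncomputable def cliquesIn (s : Finset α) : Finset (Finset α) :=
  s.powerset.filter fun K => G.IsClique (K : Set α)

variable {G}

theorem mem_cliquesIn {s K : Finset α} : K ∈ cliquesIn G s ↔ K ⊆ s ∧ G.IsClique (K : Set α) := by
  simp [cliquesIn]

theorem cliquePoly_eq_sum_cliquesIn (s : Finset α) (x : α → ℝ) :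
    cliquePoly G s x = ∑ K ∈ cliquesIn G s, (-1 : ℝ) ^ #K * ∏ v ∈ K, x v :=
  rfl

theorem sum_cliquesIn_sum_erase {M : Type*} [AddCommMonoid M] (s : Finset α)
    (f : Finset α → α → M) :
    ∑ K ∈ cliquesIn G s, ∑ w ∈ K, f (K.erase w) w =
      ∑ w ∈ s, ∑ K ∈ cliquesIn G (s.filter (G.Adj w)), f K w := by
  rw [sum_comm' (t' := s) (s' := fun w => (cliquesIn G s).filter (w ∈ ·))
    fun K w => by simp only [mem_filter, mem_cliquesIn]; grind]
  refine sum_congr rfl fun w hw => sum_nbij' (·.erase w) (insert w) ?_ ?_ ?_ ?_ fun _ _ => rfl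
  · simp only [mem_filter, mem_cliquesIn, and_imp]
    intro K hKs hK hwK
    refine ⟨fun z hz => ?_, hK.subset (by simp)⟩
    obtain ⟨hzw, hzK⟩ := mem_erase.1 hz
    exact mem_filter.2 ⟨hKs hzK, hK hwK hzK hzw.symm⟩
  · simp only [mem_filter, mem_cliquesIn, mem_insert_self, and_true, and_imp]
    intro K hKs hK
    refine ⟨insert_subset hw (hKs.trans (filter_subset _ _)), ?_⟩
    rw [coe_insert]
    exact hK.insert fun b hb _ => (mem_filter.1 (hKs hb)).2
  · intro K hK
    exact insert_erase (mem_filter.1 hK).2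
  · intro K hK
    exact erase_insert fun hwK => G.irrefl (mem_filter.1 ((mem_cliquesIn.1 hK).1 hwK)).2

theorem cliquePoly_eq_one_of_forall_eq_zero {s : Finset α} {x : α → ℝ} (hx : ∀ v ∈ s, x v = 0) :
    cliquePoly G s x = 1 := by
  rw [cliquePoly_eq_sum_cliquesIn, sum_eq_single_of_mem ∅ (mem_cliquesIn.2 (by simp))]
  · simp
  · intro K hK hne
    obtain ⟨v, hv⟩ := nonempty_iff_ne_empty.2 hne
    rw [prod_eq_zero hv (hx v ((mem_cliquesIn.1 hK).1 hv)), mul_zero]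

theorem cliquePoly_singleton (v : α) (x : α → ℝ) : cliquePoly G {v} x = 1 - x v := by
  have : cliquesIn G {v} = {∅, {v}} := by
    ext K
    simp only [mem_cliquesIn, subset_singleton_iff, mem_insert, mem_singleton]
    constructor
    · exact fun h => h.1
    · rintro (rfl | rfl) <;> simp
  rw [cliquePoly_eq_sum_cliquesIn, this, sum_pair (singleton_ne_empty v).symm]
  simp [sub_eq_add_neg]

theorem continuous_cliquePoly (s : Finset α) : Continuous (cliquePoly G s) := by
  unfold cliquePoly
  fun_prop

theorem hasDerivAt_cliquePoly_smul (s : Finset α) (u : α → ℝ) (t : ℝ) :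
    HasDerivAt (fun t : ℝ => cliquePoly G s (t • u))
      (-∑ w ∈ s, u w * cliquePoly G (s.filter (G.Adj w)) (t • u)) t := by
  have hK (K : Finset α) : HasDerivAt (fun t : ℝ => ∏ v ∈ K, (t • u) v)
      (∑ w ∈ K, (∏ v ∈ K.erase w, (t • u) v) * u w) t := by
    simpa using HasDerivAt.fun_finsetProd (u := K) fun v _ => (hasDerivAt_id t).mul_const (u v)
  refine (HasDerivAt.fun_sum (u := cliquesIn G s) fun K _ =>
    (hK K).const_mul ((-1 : ℝ) ^ #K)).congr_deriv ?_
  simp only [cliquePoly_eq_sum_cliquesIn, mul_sum, ← sum_neg_distrib]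
  rw [← sum_cliquesIn_sum_erase]
  refine sum_congr rfl fun K _ => sum_congr rfl fun w hw => ?_
  rw [← card_erase_add_one hw, pow_succ]
  ring

theorem cliquePoly_smul_pos {u : α → ℝ} (hu : ∀ v, 0 ≤ u v) {r : ℝ}
    (hr : ∀ s, 0 ≤ cliquePoly G s (r • u)) (s : Finset α) {t : ℝ} (ht : 0 ≤ t) (htr : t < r) :
    0 < cliquePoly G s (t • u) := by
  induction s using Finset.strongInduction generalizing t with
  | H s ih =>
    by_cases hs : ∀ v ∈ s, u v = 0
    · rw [cliquePoly_eq_one_of_forall_eq_zero fun v hv => by simp [hs v hv]]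
      exact one_pos
    push Not at hs
    obtain ⟨v, hvs, hv⟩ := hs
    have hnbhd : ∀ w ∈ s, s.filter (G.Adj w) ⊂ s := fun w hw =>
      filter_ssubset.2 ⟨w, hw, G.irrefl⟩
    have hanti : StrictAntiOn (fun t : ℝ => cliquePoly G s (t • u)) (Set.Icc 0 r) := by
      refine strictAntiOn_of_hasDerivWithinAt_neg (convex_Icc 0 r)
        ((continuous_cliquePoly s).comp (continuous_id.smul continuous_const)).continuousOn
        (fun x _ => (hasDerivAt_cliquePoly_smul s u x).hasDerivWithinAt) fun x hx => ?_
      rw [interior_Icc] at hx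
      rw [neg_lt_zero]
      exact sum_pos' (fun w hw => mul_nonneg (hu w) (ih _ (hnbhd w hw) hx.1.le hx.2).le)
        ⟨v, hvs, mul_pos ((hu v).lt_of_ne' hv) (ih _ (hnbhd v hvs) hx.1.le hx.2)⟩
    exact (hr s).trans_lt (hanti ⟨ht, htr.le⟩ ⟨ht.trans htr.le, le_rfl⟩ htr)

end CliquePoly

section Threshold

variable {α : Type*} [Fintype α] [DecidableEq α] {G : SimpleGraph α}

theorem continuous_minK : Continuous (minK G) :=
  Continuous.finset_inf'_apply _ fun s _ => continuous_cliquePoly s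

theorem minK_le_cliquePoly (x : α → ℝ) (s : Finset α) : minK G x ≤ cliquePoly G s x :=
  inf'_le _ (mem_univ s)

theorem zero_lt_minK_iff {x : α → ℝ} : 0 < minK G x ↔ ∀ s, 0 < cliquePoly G s x :=
  ⟨fun h s => (lt_inf'_iff _).1 h s (mem_univ s), fun h => (lt_inf'_iff _).2 fun s _ => h s⟩

theorem minK_zero : minK G 0 = 1 := by
  have h (s : Finset α) : cliquePoly G s 0 = 1 := cliquePoly_eq_one_of_forall_eq_zero fun _ _ => rfl
  simp only [minK, h]
  exact inf'_const _ _

theorem rho_nonneg (u : α → ℝ) : 0 ≤ rho G u :=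
  Real.sInf_nonneg fun _ h => h.1

variable {u : α → ℝ} {v : α}

theorem exists_pos_of_eucNorm_eq_one (hu : ∀ v, 0 ≤ u v) (h : eucNorm u = 1) : ∃ v, 0 < u v := by
  by_contra! hle
  have hzero : u = 0 := funext fun v => (hle v).antisymm (hu v)
  simp [eucNorm, hzero] at h

theorem exists_minK_smul_eq_zero (hv : 0 < u v) : ∃ t : ℝ, 0 ≤ t ∧ minK G (t • u) = 0 := by
  set R := (u v)⁻¹ + 1
  have hR : 0 ≤ R := by positivity
  have hneg : minK G (R • u) ≤ 0 := by
    refine (minK_le_cliquePoly _ {v}).trans ?_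
    rw [cliquePoly_singleton, Pi.smul_apply, smul_eq_mul, add_mul, inv_mul_cancel₀ hv.ne']
    linarith
  have hcont : Continuous fun t : ℝ => minK G (t • u) :=
    continuous_minK.comp (continuous_id.smul continuous_const)
  obtain ⟨t, ht, hzero⟩ := intermediate_value_Icc' hR hcont.continuousOn
    ⟨hneg, by rw [zero_smul, minK_zero]; exact zero_le_one⟩
  exact ⟨t, ht.1, hzero⟩

theorem minK_rho_smul (hv : 0 < u v) : minK G (rho G u • u) = 0 := by
  have hclosed : IsClosed {r : ℝ | 0 ≤ r ∧ minK G (r • u) = 0} :=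
    (isClosed_le continuous_const continuous_id).inter
      (isClosed_eq (continuous_minK.comp (continuous_id.smul continuous_const)) continuous_const)
  exact (hclosed.csInf_mem (exists_minK_smul_eq_zero hv) ⟨0, fun _ h => h.1⟩).2

theorem minK_smul_pos_of_lt_rho (hu : ∀ v, 0 ≤ u v) (hv : 0 < u v) {t : ℝ} (ht : 0 ≤ t) (htρ : t < rho G u) :
    0 < minK G (t • u) := by
  have hρ (s : Finset α) : 0 ≤ cliquePoly G s (rho G u • u) :=
    (minK_rho_smul hv).symm.trans_le (minK_le_cliquePoly _ s)
  exact zero_lt_minK_iff.2 fun s => cliquePoly_smul_pos hu hρ s ht htρ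

theorem minK_smul_neg_of_rho_lt (hu : ∀ v, 0 ≤ u v) (hv : 0 < u v) {t : ℝ}
    (hρt : rho G u < t) : minK G (t • u) < 0 := by
  by_contra! h
  have hpos := zero_lt_minK_iff.2 fun s =>
    cliquePoly_smul_pos hu (fun s => h.trans (minK_le_cliquePoly _ s)) s (rho_nonneg u) hρt
  exact hpos.ne' (minK_rho_smul hv)

end Threshold

/-- Lemma 4.3(3): `ρ` is continuous on the unit sphere of the nonnegative
orthant. -/
theorem rho_continuousOn (G : SimpleGraph V) :
    ContinuousOn (rho G) {u : V → ℝ | (∀ v, 0 ≤ u v) ∧ eucNorm u = 1} := by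
  refine continuousOn_of_sign_change (f := fun u t => minK G (t • u))
    (fun t => continuous_minK.comp (continuous_const_smul t)) (fun u _ => rho_nonneg u) ?_ ?_
  · rintro u ⟨hu, hnorm⟩ t ht htρ
    obtain ⟨v, hv⟩ := exists_pos_of_eucNorm_eq_one hu hnorm
    exact minK_smul_pos_of_lt_rho hu hv ht htρ
  · rintro u ⟨hu, hnorm⟩ t hρt
    obtain ⟨v, hv⟩ := exists_pos_of_eucNorm_eq_one hu hnorm
    exact minK_smul_neg_of_rho_lt hu hv hρt
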